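/- Assume p ≥ 3. Then for any v_{1,0}, v_{2,0}, v'_{2,0}, v_{2,1} ∈ R and any α_0, α_1, α_2 ∈ R, there exists a unique additive map φ_2 : Fil²M → M such that φ_2(s·x) = φ(s)·φ_2(x) for all s ∈ S̄ and x ∈ Fil²M, and φ_2(f_i) = α_i·e_i for i = 0, 1, 2. -/
import Mathlib


open Polynomial

/-- `S̄ = R[u]/(u^{ep})` with `e = p - 1`, realized as `R[X]/(X^{(p-1)p})`. -/
noncomputable def Sbar (p : ℕ) (R : Type*) [CommRing R] : Type _ :=
  R[X] ⧸ Ideal.span ({(X : R[X]) ^ ((p - 1) * p)} : Set R[X])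

noncomputable instance (p : ℕ) (R : Type*) [CommRing R] : CommRing (Sbar p R) :=
  inferInstanceAs (CommRing (R[X] ⧸ Ideal.span ({(X : R[X]) ^ ((p - 1) * p)} : Set R[X])))

noncomputable instance (p : ℕ) (R : Type*) [CommRing R] : Algebra R (Sbar p R) :=
  inferInstanceAs (Algebra R (R[X] ⧸ Ideal.span ({(X : R[X]) ^ ((p - 1) * p)} : Set R[X])))

/-- The image `u` of the variable `X` in `S̄`. -/
noncomputable def Sbar.u (p : ℕ) (R : Type*) [CommRing R] : Sbar p R :=
  (Ideal.Quotient.mk (Ideal.span ({(X : R[X]) ^ ((p - 1) * p)} : Set R[X])) X :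
    R[X] ⧸ Ideal.span ({(X : R[X]) ^ ((p - 1) * p)} : Set R[X]))

lemma Sbar.u_pow_top (p : ℕ) (R : Type*) [CommRing R] :
    Sbar.u p R ^ ((p - 1) * p) = 0 := by
  show (Ideal.Quotient.mk (Ideal.span ({(X : R[X]) ^ ((p - 1) * p)} : Set R[X])) X) ^ ((p-1)*p)
      = 0
  rw [← map_pow, Ideal.Quotient.eq_zero_iff_mem]
  exact Ideal.subset_span rfl

lemma Sbar.u_pow_ge (p : ℕ) (R : Type*) [CommRing R] {m : ℕ} (hm : (p - 1) * p ≤ m) :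
    Sbar.u p R ^ m = 0 := by
  rw [← Nat.add_sub_cancel' hm, pow_add, Sbar.u_pow_top, zero_mul]

lemma Sbar.factor (p : ℕ) (R : Type*) [CommRing R] {k : ℕ} (hk : k ≤ (p - 1) * p)
    {s : Sbar p R} (h : s * Sbar.u p R ^ k = 0) :
    ∃ r : Sbar p R, s = Sbar.u p R ^ ((p - 1) * p - k) * r := by
  obtain ⟨q, rfl⟩ := Ideal.Quotient.mk_surjective
    (I := Ideal.span ({(X : R[X]) ^ ((p - 1) * p)} : Set R[X])) s
  have hdvd : (X : R[X]) ^ ((p - 1) * p) ∣ q * X ^ k := by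
    rw [← Ideal.mem_span_singleton, ← Ideal.Quotient.eq_zero_iff_mem, map_mul, map_pow]
    exact h
  obtain ⟨t, ht⟩ := hdvd
  have hq : q = X ^ ((p - 1) * p - k) * t := by
    have hreg := (monic_X_pow (R := R) k).isRegular.right
    apply hreg
    show q * X ^ k = X ^ ((p - 1) * p - k) * t * X ^ k
    rw [ht, mul_right_comm, pow_sub_mul_pow _ hk]
  refine ⟨Ideal.Quotient.mk _ t, ?_⟩
  rw [hq, map_mul, map_pow]
  rfl

lemma Sbar.phi_kill (p : ℕ) (R : Type*) [CommRing R]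
    (φ : Sbar p R →ₐ[R] Sbar p R) (hφ : φ (Sbar.u p R) = Sbar.u p R ^ p)
    {k : ℕ} (hk : k ≤ (p - 1) * p) (hk2 : (p - 1) * p ≤ p * ((p - 1) * p - k))
    {s : Sbar p R} (h : s * Sbar.u p R ^ k = 0) : φ s = 0 := by
  obtain ⟨r, rfl⟩ := Sbar.factor p R hk h
  rw [map_mul, map_pow, hφ, ← pow_mul, Sbar.u_pow_ge p R hk2, zero_mul]

/-- For `p ≥ 3` there is a unique additive map `φ₂ : Fil²M → M` which is semilinear with
respect to the Frobenius `φ` (the `R`-algebra endomorphism of `S̄` with `φ(u) = u^p`) and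
sends the standard generators `f_0, f_1, f_2` of the ordinary-form filtration to
`α_0 e_0, α_1 e_1, α_2 e_2` respectively. -/
theorem frobenius_on_ordinary_filtration_exists_unique
    (p : ℕ) (hp : p.Prime) (hp3 : 3 ≤ p)
    (a : Fin 3 → ℤ)
    (br : Fin 3 → Fin 3 → ℕ)
    (hbr : ∀ i j, br i j < p - 1 ∧ ((p : ℤ) - 1) ∣ ((br i j : ℤ) + (a i - a j)))
    (R : Type*) [CommRing R]
    (φ : Sbar p R →ₐ[R] Sbar p R) (hφ : φ (Sbar.u p R) = Sbar.u p R ^ p)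
    (v10 v20 v20' v21 : R) (α : Fin 3 → R)
    (f : Fin 3 → (Fin 3 → Sbar p R))
    (hf0 : f 0 = ![1, Sbar.u p R ^ br 1 0 * algebraMap R (Sbar p R) v10,
        Sbar.u p R ^ br 2 0 *
          (algebraMap R (Sbar p R) v20 +
            Sbar.u p R ^ (p - 1) * algebraMap R (Sbar p R) v20')])
    (hf1 : f 1 = ![0, Sbar.u p R ^ (p - 1),
        Sbar.u p R ^ ((p - 1) + br 2 1) * algebraMap R (Sbar p R) v21])
    (hf2 : f 2 = ![0, 0, Sbar.u p R ^ (2 * (p - 1))])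
    (Fil : Submodule (Sbar p R) (Fin 3 → Sbar p R))
    (hFil : Fil = Submodule.span (Sbar p R) {f 0, f 1, f 2})
    (hmem : ∀ i, f i ∈ Fil) :
    ∃! φ2 : Fil →+ (Fin 3 → Sbar p R),
      (∀ (s : Sbar p R) (x : Fil), φ2 (s • x) = φ s • (φ2 x)) ∧
      (∀ i : Fin 3, φ2 ⟨f i, hmem i⟩ =
        algebraMap R (Sbar p R) (α i) • (Pi.single i 1 : Fin 3 → Sbar p R)) := by
  classical
  obtain ⟨e, rfl⟩ : ∃ e, p = e + 3 := ⟨p - 3, by omega⟩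
  -- arithmetic facts
  have hd1 : ((e + 3) - 1) * (e + 3) - ((e + 3) - 1) = (e + 2) * (e + 2) := by
    show (e + 2) * (e + 3) - (e + 2) = (e + 2) * (e + 2)
    have h : (e + 2) * (e + 3) = (e + 2) * (e + 2) + (e + 2) := by ring
    rw [h, Nat.add_sub_cancel]
  have hd2 : ((e + 3) - 1) * (e + 3) - 2 * ((e + 3) - 1) = (e + 2) * (e + 1) := by
    show (e + 2) * (e + 3) - 2 * (e + 2) = (e + 2) * (e + 1)
    have h : (e + 2) * (e + 3) = (e + 2) * (e + 1) + 2 * (e + 2) := by ring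
    rw [h, Nat.add_sub_cancel]
  have hk1 : ((e + 3) - 1) ≤ ((e + 3) - 1) * (e + 3) := by
    show (e + 2) ≤ (e + 2) * (e + 3); nlinarith
  have hk2 : 2 * ((e + 3) - 1) ≤ ((e + 3) - 1) * (e + 3) := by
    show 2 * (e + 2) ≤ (e + 2) * (e + 3); nlinarith
  have hq1 : ((e + 3) - 1) * (e + 3) ≤ (e + 3) * (((e + 3) - 1) * (e + 3) - ((e + 3) - 1)) := by
    rw [hd1]; show (e + 2) * (e + 3) ≤ (e + 3) * ((e + 2) * (e + 2)); nlinarith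
  have hq2 : ((e + 3) - 1) * (e + 3) ≤ (e + 3) * (((e + 3) - 1) * (e + 3) - 2 * ((e + 3) - 1)) := by
    rw [hd2]; show (e + 2) * (e + 3) ≤ (e + 3) * ((e + 2) * (e + 1)); nlinarith
  set u := Sbar.u (e + 3) R with hu
  -- kernel lemma
  have hker : ∀ c : Fin 3 → Sbar (e + 3) R, (∑ i, c i • f i) = 0 → ∀ j, φ (c j) = 0 := by
    intro c h
    have h' : ∀ j, c 0 * f 0 j + c 1 * f 1 j + c 2 * f 2 j = 0 := by
      intro j
      have := congr_fun h j
      simpa [Fin.sum_univ_three] using this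
    have hc0 : c 0 = 0 := by
      have := h' 0
      rw [hf0, hf1, hf2] at this
      simpa using this
    have hc1 : c 1 * u ^ ((e + 3) - 1) = 0 := by
      have := h' 1
      rw [hf0, hf1, hf2] at this
      simpa [hc0] using this
    have hc1' : c 1 * u ^ (e + 2) = 0 := hc1
    have hc2 : c 2 * u ^ (2 * ((e + 3) - 1)) = 0 := by
      have := h' 2
      rw [hf0, hf1, hf2] at this
      have e1 : c 1 * (u ^ ((e + 2) + br 2 1) * algebraMap R (Sbar (e + 3) R) v21) = 0 := by
        rw [pow_add, show c 1 * (u ^ (e + 2) * u ^ br 2 1 * algebraMap R (Sbar (e + 3) R) v21)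
          = (c 1 * u ^ (e + 2)) * (u ^ br 2 1 * algebraMap R (Sbar (e + 3) R) v21) from by ring,
          hc1', zero_mul]
      simpa [hc0, e1] using this
    intro j
    fin_cases j
    · show φ (c 0) = 0
      rw [hc0, map_zero]
    · show φ (c 1) = 0
      exact Sbar.phi_kill (e + 3) R φ hφ hk1 hq1 hc1
    · show φ (c 2) = 0
      exact Sbar.phi_kill (e + 3) R φ hφ hk2 hq2 hc2
  have hwd : ∀ c d : Fin 3 → Sbar (e + 3) R,
      (∑ i, c i • f i) = (∑ i, d i • f i) → ∀ j, φ (c j) = φ (d j) := by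
    intro c d h j
    have h0 : (∑ i, (c - d) i • f i) = 0 := by
      simp only [Pi.sub_apply, sub_smul, Finset.sum_sub_distrib, h, sub_self]
    have := hker (c - d) h0 j
    simp only [Pi.sub_apply, map_sub, sub_eq_zero] at this
    exact this
  -- representation by coefficients
  have hrange : Fil = Submodule.span (Sbar (e + 3) R) (Set.range f) := by
    rw [hFil]; congr 1
    ext x
    simp only [Set.mem_insert_iff, Set.mem_singleton_iff, Set.mem_range]
    constructor
    · rintro (rfl | rfl | rfl)
      exacts [⟨0, rfl⟩, ⟨1, rfl⟩, ⟨2, rfl⟩]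
    · rintro ⟨i, rfl⟩
      fin_cases i <;> simp
  have hrep : ∀ x : Fil, ∃ c : Fin 3 → Sbar (e + 3) R,
      ∑ i, c i • f i = (x : Fin 3 → Sbar (e + 3) R) := by
    intro x
    have hx : (x : Fin 3 → Sbar (e + 3) R) ∈
        Submodule.span (Sbar (e + 3) R) (Set.range f) := by
      rw [← hrange]; exact x.2
    exact (Submodule.mem_span_range_iff_exists_fun _).1 hx
  choose co hco using hrep
  -- the candidate map
  refine ⟨{ toFun := fun x => fun j => algebraMap R (Sbar (e + 3) R) (α j) * φ (co x j)
            map_zero' := ?_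
            map_add' := ?_ }, ⟨?_, ?_⟩, ?_⟩
  · funext j
    have : φ (co 0 j) = φ ((0 : Fin 3 → Sbar (e + 3) R) j) := by
      refine hwd _ _ ?_ j
      rw [hco]
      simp
    simp only [this, Pi.zero_apply, map_zero, mul_zero, Pi.zero_apply]
  · intro x y
    funext j
    have : φ (co (x + y) j) = φ ((co x + co y) j) := by
      refine hwd _ _ ?_ j
      rw [hco]
      simp only [Pi.add_apply, add_smul, Finset.sum_add_distrib, hco x, hco y]
      rfl
    simp only [this, Pi.add_apply, map_add, mul_add]
  · intro s x
    funext j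
    show algebraMap R (Sbar (e + 3) R) (α j) * φ (co (s • x) j)
        = φ s * (algebraMap R (Sbar (e + 3) R) (α j) * φ (co x j))
    have : φ (co (s • x) j) = φ ((s • co x) j) := by
      refine hwd _ _ ?_ j
      rw [hco]
      simp only [Pi.smul_apply, smul_eq_mul, ← smul_smul, ← Finset.smul_sum, hco x]
      rfl
    rw [this, Pi.smul_apply, smul_eq_mul, map_mul]
    ring
  · intro i
    have hs : ∀ j, φ (co ⟨f i, hmem i⟩ j)
        = φ ((Pi.single i 1 : Fin 3 → Sbar (e + 3) R) j) := by
      refine hwd _ _ ?_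
      rw [hco]
      simp [Pi.single_apply, ite_smul]
    funext j
    show algebraMap R (Sbar (e + 3) R) (α j) * φ (co ⟨f i, hmem i⟩ j)
        = (algebraMap R (Sbar (e + 3) R) (α i) • (Pi.single i 1 : Fin 3 → Sbar (e + 3) R)) j
    rw [hs j, Pi.smul_apply, smul_eq_mul]
    by_cases hji : j = i
    · subst hji
      simp
    · rw [Pi.single_eq_of_ne hji]
      simp
  · rintro g ⟨hg1, hg2⟩
    apply AddMonoidHom.ext
    intro x
    have hxrep : x = ∑ i, co x i • (⟨f i, hmem i⟩ : Fil) := by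
      apply Subtype.ext
      rw [show ((∑ i, co x i • (⟨f i, hmem i⟩ : Fil) : Fil) : Fin 3 → Sbar (e + 3) R)
          = ∑ i, co x i • f i from by
        simp [AddSubmonoidClass.coe_finset_sum]]
      exact (hco x).symm
    show g x = (fun j => algebraMap R (Sbar (e + 3) R) (α j) * φ (co x j))
    calc g x = g (∑ i, co x i • ⟨f i, hmem i⟩) := by rw [← hxrep]
      _ = ∑ i, φ (co x i) •
            (algebraMap R (Sbar (e + 3) R) (α i) • (Pi.single i 1 : Fin 3 → Sbar (e + 3) R)) := by
          rw [map_sum]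
          exact Finset.sum_congr rfl fun i _ => by rw [hg1, hg2]
      _ = fun j => algebraMap R (Sbar (e + 3) R) (α j) * φ (co x j) := by
          funext j
          fin_cases j <;>
            simp [Fin.sum_univ_three, Pi.single_apply] <;>
            exact Algebra.smul_def _ _
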